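/- arXiv:1407.8356 — 2 statements merged into one kernel-verified Lean document; each statement's English description precedes it below -/
import Mathlib

section
/- Let (X,μ) be a measure space, let E and Ê be measurable subsets of X of positive finite measure, and let φ be a non-negative measurable function defined on E ∪ Ê with φ^p integrable there, such that: (1) (1/μ(E))∫_E φ dμ = (1/μ(Ê))∫_Ê φ dμ = A; (2) φ(x) ≤ A for every x ∈ (E ∪ Ê) \ (E ∩ Ê); and (3) φ(x) ≤ φ(y) for every x ∈ Ê \ E and every y ∈ E. Then for every p > 1, (1/μ(E))∫_E φ^p dμ ≤ (1/μ(Ê))∫_Ê φ^p dμ. -/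
open MeasureTheory Set
open scoped ENNReal

/-!
Since `φ` has the same average `A` on `E` and `Ê`, subtracting an affine function from `t ↦ t ^ p`
changes both sides by the same amount. Let `c = inf_E φ`. If `c < A`, subtract the chord of
`t ↦ t ^ p` through `c` and `A`: the result `g` is convex, `≤ 0` on `[c, A]` and `≥ 0` elsewhere.
Hence `g ∘ φ ≤ 0` on `E \ Ê`, where `c ≤ φ ≤ A`, and `g ∘ φ ≥ 0` on `Ê \ E`, where `φ ≤ c`.
On `E ∩ Ê` the average of `φ` is at least `A`, so Jensen gives `∫_{E ∩ Ê} g ∘ φ ≥ 0`.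
Comparing `∫ (φ - A)` over `E \ Ê` and `Ê \ E` shows `μ Ê ≤ μ E`, and dividing by the measures
then yields the claim. If `c = A`, then `φ = A` a.e. on `E`, and the claim is Jensen on `Ê`.
-/

section Chord

variable {K : Set ℝ} {g : ℝ → ℝ} {a b t : ℝ}

theorem ConvexOn.nonpos_of_mem_Icc_of_eq_zero (hg : ConvexOn ℝ K g) (ha : a ∈ K) (hb : b ∈ K)
    (hga : g a = 0) (hgb : g b = 0) (ht : t ∈ Icc a b) : g t ≤ 0 := by
  simpa [hga, hgb] using hg.le_on_segment ha hb (segment_eq_Icc (ht.1.trans ht.2) ▸ ht)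

theorem ConvexOn.nonneg_of_le_left_of_eq_zero (hg : ConvexOn ℝ K g) (ht : t ∈ K) (hb : b ∈ K)
    (hga : g a = 0) (hgb : g b = 0) (hta : t ≤ a) (hab : a < b) : 0 ≤ g t :=
  hga ▸ hg.le_left_of_right_le'' ht hb hta hab (hgb.trans hga.symm).le

theorem ConvexOn.nonneg_of_right_le_of_eq_zero (hg : ConvexOn ℝ K g) (ha : a ∈ K) (ht : t ∈ K)
    (hga : g a = 0) (hgb : g b = 0) (hab : a < b) (hbt : b ≤ t) : 0 ≤ g t :=
  hgb ▸ hg.le_right_of_left_le'' ha ht hab hbt (hga.trans hgb.symm).le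

end Chord

section Average

variable {X : Type*} [MeasurableSpace X] {μ : Measure X} {E F S : Set X} {φ ψ : X → ℝ}
  {A c : ℝ} {K : Set ℝ}

theorem setAverage_sub_const_add_mul {u : X → ℝ} (hμS0 : μ S ≠ 0) (hμS : μ S ≠ ∞)
    (hu : IntegrableOn u S μ) (hφ : IntegrableOn φ S μ) (havg : ⨍ x in S, φ x ∂μ = A) (α β : ℝ) :
    ⨍ x in S, (u x - (α + β * φ x)) ∂μ = ⨍ x in S, u x ∂μ - (α + β * A) := by
  have hpos : 0 < μ.real S := ENNReal.toReal_pos hμS0 hμS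
  have hconst : IntegrableOn (fun _ => α) S μ := integrableOn_const hμS
  have haff : IntegrableOn (fun x => α + β * φ x) S μ := hconst.add (hφ.const_mul β)
  simp only [setAverage_eq, smul_eq_mul] at havg ⊢
  rw [integral_sub hu haff, integral_add hconst (hφ.const_mul β),
    integral_const_mul, setIntegral_const, smul_eq_mul, ← havg]
  field_simp

theorem measure_le_of_setIntegral_eq (hE : MeasurableSet E) (hF : MeasurableSet F)
    (hμE : μ E ≠ ∞) (hμF : μ F ≠ ∞) (hψ : IntegrableOn ψ (E ∪ F) μ)
    (h : ∫ x in E, ψ x ∂μ = ∫ x in F, ψ x ∂μ) {δ : ℝ} (hδ : δ < 0)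
    (hψE : ∀ x ∈ E \ F, δ ≤ ψ x) (hψF : ∀ x ∈ F \ E, ψ x ≤ δ) : μ F ≤ μ E := by
  have hμEF : μ (E \ F) ≠ ∞ := measure_ne_top_of_subset sdiff_subset hμE
  have hμFE : μ (F \ E) ≠ ∞ := measure_ne_top_of_subset sdiff_subset hμF
  have hdiff : ∫ x in E \ F, ψ x ∂μ = ∫ x in F \ E, ψ x ∂μ := by
    have hsplitE := integral_inter_add_sdiff hF (hψ.mono_set subset_union_left)
    have hsplitF := integral_inter_add_sdiff hE (hψ.mono_set subset_union_right)
    rw [inter_comm] at hsplitF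
    linarith
  have hlow := setIntegral_ge_of_const_le_real (hE.diff hF) hμEF hψE
    (hψ.mono_set (sdiff_subset.trans subset_union_left))
  have hup : ∫ x in F \ E, ψ x ∂μ ≤ δ * μ.real (F \ E) := by
    rw [mul_comm, ← smul_eq_mul, ← setIntegral_const]
    exact setIntegral_mono_on (hψ.mono_set (sdiff_subset.trans subset_union_right))
      (integrableOn_const hμFE) (hF.diff hE) hψF
  have hreal : μ.real (F \ E) ≤ μ.real (E \ F) :=
    (mul_le_mul_left_of_neg hδ).1 (hlow.trans (hdiff ▸ hup))
  rw [← measure_inter_add_sdiff E hF, ← measure_inter_add_sdiff F hE, inter_comm]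
  exact add_le_add_right ((ENNReal.toReal_le_toReal hμFE hμEF).1 hreal) _

theorem setAverage_le_setAverage_of_inter_nonneg {g : X → ℝ} (hE : MeasurableSet E)
    (hF : MeasurableSet F) (hμE : μ E ≠ ∞) (hμF : μ F ≠ 0) (hμ : μ F ≤ μ E)
    (hg : IntegrableOn g (E ∪ F) μ) (hgE : ∀ x ∈ E \ F, g x ≤ 0) (hgF : ∀ x ∈ F \ E, 0 ≤ g x)
    (hg_inter : 0 ≤ ∫ x in E ∩ F, g x ∂μ) :
    ⨍ x in E, g x ∂μ ≤ ⨍ x in F, g x ∂μ := by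
  have hμF' : μ F ≠ ∞ := ne_top_of_le_ne_top hμE hμ
  have hE_le : ∫ x in E, g x ∂μ ≤ ∫ x in E ∩ F, g x ∂μ := by
    rw [← integral_inter_add_sdiff hF (hg.mono_set subset_union_left)]
    linarith [setIntegral_nonpos (μ := μ) (hE.diff hF) hgE]
  have hF_ge : ∫ x in E ∩ F, g x ∂μ ≤ ∫ x in F, g x ∂μ := by
    rw [← integral_inter_add_sdiff hE (hg.mono_set subset_union_right), inter_comm F E]
    linarith [setIntegral_nonneg (μ := μ) (hF.diff hE) hgF]
  have hpos : 0 < μ.real F := ENNReal.toReal_pos hμF hμF'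
  have hle : μ.real F ≤ μ.real E := (ENNReal.toReal_le_toReal hμF' hμE).2 hμ
  simp only [setAverage_eq, smul_eq_mul]
  calc (μ.real E)⁻¹ * ∫ x in E, g x ∂μ ≤ (μ.real E)⁻¹ * ∫ x in E ∩ F, g x ∂μ := by gcongr
    _ ≤ (μ.real F)⁻¹ * ∫ x in E ∩ F, g x ∂μ := by gcongr
    _ ≤ (μ.real F)⁻¹ * ∫ x in F, g x ∂μ := by gcongr

theorem ConvexOn.setIntegral_comp_nonneg {g : ℝ → ℝ} (hg : ConvexOn ℝ K g)
    (hgc : ContinuousOn g K) (hK : IsClosed K) (hS : MeasurableSet S) (hμS : μ S ≠ ∞)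
    (hφK : ∀ x ∈ S, φ x ∈ K) (hφ : IntegrableOn φ S μ)
    (hgφ : IntegrableOn (fun x => g (φ x)) S μ) (hA : 0 ≤ ∫ x in S, (φ x - A) ∂μ)
    (hgA : ∀ t ∈ K, A ≤ t → 0 ≤ g t) : 0 ≤ ∫ x in S, g (φ x) ∂μ := by
  rcases eq_or_ne (μ S) 0 with h0 | h0
  · rw [setIntegral_measure_zero _ h0]
  have hφK' := ae_restrict_of_forall_mem (μ := μ) hS hφK
  have hA' : A ≤ ⨍ x in S, φ x ∂μ := by
    rw [integral_sub hφ (integrableOn_const hμS), setIntegral_const,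
      ← measure_smul_setAverage φ hμS, smul_eq_mul, smul_eq_mul, ← mul_sub] at hA
    exact sub_nonneg.1 (nonneg_of_mul_nonneg_right hA (ENNReal.toReal_pos h0 hμS))
  rw [← measure_smul_setAverage _ hμS]
  exact smul_nonneg measureReal_nonneg <|
    (hgA _ (hg.1.set_average_mem hK h0 hμS hφK' hφ) hA').trans
      (hg.map_set_average_le hgc hK h0 hμS hφK' hφ hgφ)

theorem setAverage_comp_eq_of_forall_setAverage_le (f : ℝ → ℝ) (hS : MeasurableSet S)
    (hμS0 : μ S ≠ 0) (hμS : μ S ≠ ∞) (hφ : IntegrableOn φ S μ) (havg : ⨍ x in S, φ x ∂μ = A)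
    (hle : ∀ x ∈ S, A ≤ φ x) : ⨍ x in S, f (φ x) ∂μ = f A := by
  have hint : ∫ x in S, A ∂μ = ∫ x in S, φ x ∂μ := by
    rw [setIntegral_const, ← measure_smul_setAverage φ hμS, havg]
  have hae : (fun _ => A) =ᵐ[μ.restrict S] φ :=
    (integral_eq_iff_of_ae_le (integrableOn_const hμS) hφ (ae_restrict_of_forall_mem hS hle)).1 hint
  have hfφ : (fun x => f (φ x)) =ᵐ[μ.restrict S] fun _ => f A :=
    hae.mono fun x hx => congrArg f hx.symm
  rw [average_congr hfφ, setAverage_const hμS0 hμS]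

theorem ConvexOn.setAverage_comp_le_of_eq_zero {g : ℝ → ℝ} (hg : ConvexOn ℝ K g)
    (hgc : ContinuousOn g K) (hK : IsClosed K) (hc : c ∈ K) (hA : A ∈ K) (hcA : c < A)
    (hgc0 : g c = 0) (hgA : g A = 0) (hE : MeasurableSet E) (hF : MeasurableSet F)
    (hμE : μ E ≠ ∞) (hμF0 : μ F ≠ 0) (hμF : μ F ≠ ∞) (hφK : ∀ x ∈ E ∪ F, φ x ∈ K)
    (hφ : IntegrableOn φ (E ∪ F) μ) (hgφ : IntegrableOn (fun x => g (φ x)) (E ∪ F) μ)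
    (havgE : ⨍ x in E, φ x ∂μ = A) (havgF : ⨍ x in F, φ x ∂μ = A)
    (hD : ∀ x ∈ E \ F, φ x ≤ A) (hcE : ∀ x ∈ E, c ≤ φ x) (hcF : ∀ x ∈ F \ E, φ x ≤ c) :
    ⨍ x in E, g (φ x) ∂μ ≤ ⨍ x in F, g (φ x) ∂μ := by
  have hψ : IntegrableOn (fun x => φ x - A) (E ∪ F) μ :=
    hφ.sub (integrableOn_const (measure_union_ne_top hμE hμF))
  have hψE : ∫ x in E, (φ x - A) ∂μ = 0 := havgE ▸ setAverage_sub_setAverage hμE φ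
  have hψF : ∫ x in F, (φ x - A) ∂μ = 0 := havgF ▸ setAverage_sub_setAverage hμF φ
  have hμ : μ F ≤ μ E :=
    measure_le_of_setIntegral_eq hE hF hμE hμF hψ (hψE.trans hψF.symm) (sub_neg.2 hcA)
      (fun x hx => sub_le_sub_right (hcE x hx.1) A) (fun x hx => sub_le_sub_right (hcF x hx) A)
  have hψ_inter : 0 ≤ ∫ x in E ∩ F, (φ x - A) ∂μ := by
    have := integral_inter_add_sdiff hF (hψ.mono_set subset_union_left)
    linarith [setIntegral_nonpos (μ := μ) (hE.diff hF) fun x hx => sub_nonpos.2 (hD x hx)]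
  refine setAverage_le_setAverage_of_inter_nonneg hE hF hμE hμF0 hμ hgφ
    (fun x hx => hg.nonpos_of_mem_Icc_of_eq_zero hc hA hgc0 hgA ⟨hcE x hx.1, hD x hx⟩)
    (fun x hx => hg.nonneg_of_le_left_of_eq_zero (hφK x (.inr hx.1)) hA hgc0 hgA (hcF x hx) hcA) ?_
  exact hg.setIntegral_comp_nonneg hgc hK (hE.inter hF)
    (measure_ne_top_of_subset inter_subset_left hμE) (fun x hx => hφK x (.inl hx.1))
    (hφ.mono_set (inter_subset_left.trans subset_union_left))
    (hgφ.mono_set (inter_subset_left.trans subset_union_left)) hψ_inter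
    fun t ht hAt => hg.nonneg_of_right_le_of_eq_zero hc ht hgc0 hgA hcA hAt

theorem ConvexOn.setAverage_comp_le_setAverage_comp {f : ℝ → ℝ} (hf : ConvexOn ℝ K f)
    (hfc : ContinuousOn f K) (hK : IsClosed K) (hE : MeasurableSet E) (hF : MeasurableSet F)
    (hμE0 : μ E ≠ 0) (hμE : μ E ≠ ∞) (hμF0 : μ F ≠ 0) (hμF : μ F ≠ ∞)
    (hφK : ∀ x ∈ E ∪ F, φ x ∈ K) (hφ : IntegrableOn φ (E ∪ F) μ)
    (hfφ : IntegrableOn (fun x => f (φ x)) (E ∪ F) μ)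
    (havgE : ⨍ x in E, φ x ∂μ = A) (havgF : ⨍ x in F, φ x ∂μ = A)
    (hD : ∀ x ∈ E \ F, φ x ≤ A) (hc : c ∈ K) (hcE : ∀ x ∈ E, c ≤ φ x)
    (hcF : ∀ x ∈ F \ E, φ x ≤ c) :
    ⨍ x in E, f (φ x) ∂μ ≤ ⨍ x in F, f (φ x) ∂μ := by
  have hφE := hφ.mono_set (μ := μ) subset_union_left
  have hφF := hφ.mono_set (μ := μ) subset_union_right
  rcases lt_or_ge c A with hcA | hAc
  · set β := slope f c A
    set α := f c - β * c
    have hA : A ∈ K := havgE ▸ hf.1.set_average_mem hK hμE0 hμE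
      (ae_restrict_of_forall_mem hE fun x hx => hφK x (.inl hx)) hφE
    have hgA : f A - (α + β * A) = 0 := by
      have := sub_smul_slope f c A
      simp only [smul_eq_mul, vsub_eq_sub] at this
      simp only [α]
      linarith
    rw [← sub_le_sub_iff_right (α + β * A),
      ← setAverage_sub_const_add_mul hμE0 hμE (hfφ.mono_set subset_union_left) hφE havgE,
      ← setAverage_sub_const_add_mul hμF0 hμF (hfφ.mono_set subset_union_right) hφF havgF]
    refine (hf.sub ((concaveOn_const α hf.1).add ((LinearMap.mul ℝ ℝ β).concaveOn hf.1))
      ).setAverage_comp_le_of_eq_zero (hfc.sub (by fun_prop)) hK hc hA hcA (by simp [α]) hgA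
      hE hF hμE hμF0 hμF hφK hφ ?_ havgE havgF hD hcE hcF
    exact hfφ.sub ((integrableOn_const (measure_union_ne_top hμE hμF)).add (hφ.const_mul β))
  · calc ⨍ x in E, f (φ x) ∂μ = f A :=
          setAverage_comp_eq_of_forall_setAverage_le f hE hμE0 hμE hφE havgE
            fun x hx => hAc.trans (hcE x hx)
      _ ≤ ⨍ x in F, f (φ x) ∂μ := havgF ▸ hf.map_set_average_le hfc hK hμF0 hμF
          (ae_restrict_of_forall_mem hF fun x hx => hφK x (.inr hx)) hφF
          (hfφ.mono_set subset_union_right)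

theorem MeasureTheory.IntegrableOn.of_rpow {p : ℝ} (hp : 1 ≤ p) (hS : MeasurableSet S)
    (hμS : μ S ≠ ∞) (hφm : AEStronglyMeasurable φ (μ.restrict S)) (hφ0 : ∀ x ∈ S, 0 ≤ φ x)
    (hφp : IntegrableOn (fun x => φ x ^ p) S μ) : IntegrableOn φ S μ := by
  refine ((integrableOn_const hμS (C := (1 : ℝ))).add hφp).mono' hφm ?_
  filter_upwards [ae_restrict_mem hS] with x hx
  rw [Pi.add_apply, Real.norm_of_nonneg (hφ0 x hx)]
  rcases le_total (φ x) 1 with h | h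
  · linarith [Real.rpow_nonneg (hφ0 x hx) p]
  · linarith [Real.self_le_rpow_of_one_le h hp]

end Average

/-- Lemma: if a nonnegative function `φ` has the same average `A` over two sets `E` and
`Ê`, is bounded by `A` off `E ∩ Ê`, and its values on `Ê \ E` do not exceed its values
on `E`, then for every `p > 1` the `p`-th power average over `E` does not exceed the one
over `Ê`. -/
theorem average_pow_le_of_averages_eq
    {X : Type*} [MeasurableSpace X] (μ : Measure X)
    (E Ehat : Set X) (hE : MeasurableSet E) (hEhat : MeasurableSet Ehat)
    (hμE : 0 < μ E) (hμE' : μ E < ⊤) (hμEhat : 0 < μ Ehat) (hμEhat' : μ Ehat < ⊤)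
    (φ : X → ℝ) (hφm : Measurable φ) (hφ0 : ∀ x ∈ E ∪ Ehat, 0 ≤ φ x)
    (p : ℝ) (hp : 1 < p)
    (hφint : IntegrableOn (fun x => φ x ^ p) (E ∪ Ehat) μ)
    (A : ℝ)
    (havgE : (1 / (μ E).toReal) * ∫ x in E, φ x ∂μ = A)
    (havgEhat : (1 / (μ Ehat).toReal) * ∫ x in Ehat, φ x ∂μ = A)
    (hbd : ∀ x ∈ (E ∪ Ehat) \ (E ∩ Ehat), φ x ≤ A)
    (hcmp : ∀ x ∈ Ehat \ E, ∀ y ∈ E, φ x ≤ φ y) :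
    (1 / (μ E).toReal) * ∫ x in E, φ x ^ p ∂μ ≤
      (1 / (μ Ehat).toReal) * ∫ x in Ehat, φ x ^ p ∂μ := by
  have avg_eq (S : Set X) (u : X → ℝ) :
      1 / (μ S).toReal * ∫ x in S, u x ∂μ = ⨍ x in S, u x ∂μ := by
    rw [setAverage_eq, smul_eq_mul, measureReal_def, one_div]
  rw [avg_eq] at havgE havgEhat
  rw [avg_eq, avg_eq]
  have hφ : IntegrableOn φ (E ∪ Ehat) μ := hφint.of_rpow hp.le (hE.union hEhat)
    (measure_union_lt_top hμE' hμEhat').ne hφm.aestronglyMeasurable hφ0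
  have hEne : E.Nonempty := nonempty_of_measure_ne_zero hμE.ne'
  have hbdd : BddBelow (φ '' E) := ⟨0, forall_mem_image.2 fun y hy => hφ0 y (.inl hy)⟩
  exact (convexOn_rpow hp.le).setAverage_comp_le_setAverage_comp
    (Real.continuous_rpow_const (by linarith)).continuousOn isClosed_Ici hE hEhat hμE.ne' hμE'.ne
    hμEhat.ne' hμEhat'.ne hφ0 hφ hφint havgE havgEhat
    (fun x hx => hbd x ⟨.inl hx.1, fun h => hx.2 h.2⟩) (c := sInf (φ '' E))
    (le_csInf (hEne.image φ) (forall_mem_image.2 fun y hy => hφ0 y (.inl hy)))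
    (fun y hy => csInf_le hbdd (mem_image_of_mem φ hy))
    (fun x hx => le_csInf (hEne.image φ) (forall_mem_image.2 (hcmp x hx)))
end

section
/- Let (X,μ) be a measure space, let Γ ⊆ I be measurable sets with 0 < μ(Γ) < μ(I) < ∞, let Δ = I \ Γ with μ(Δ) > 0, let p > 1, and let φ: I → [0,∞) be measurable with φ^p integrable on I. Then ∫_Δ φ^p dμ ≥ (1/μ(I)^{p−1})·(∫_I φ dμ)^p − (1/μ(Γ)^{p−1})·(∫_Γ φ dμ)^p. -/
/-!
Write `a, d` for the integrals of `φ` over `Γ, Δ` and `α, δ` for their measures,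
so that `∫_I φ = a + d` and `μ(I) = α + δ`. Convexity of `t ↦ t^p`, applied at `a/α` and `d/δ` with
weights `α/(α+δ)` and `δ/(α+δ)`, gives Radon's inequality
`(a + d)^p / (α + δ)^(p-1) ≤ a^p / α^(p-1) + d^p / δ^(p-1)`,
and Jensen's inequality on `Δ` bounds `d^p / δ^(p-1)` by `∫_Δ φ^p`.
-/

open MeasureTheory Set

namespace Real

theorem mul_div_rpow_eq {x y : ℝ} (p : ℝ) (hx : 0 < x) (hy : 0 ≤ y) :
    x * (y / x) ^ p = y ^ p / x ^ (p - 1) := by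
  rw [div_rpow hy hx.le, rpow_sub_one hx.ne']
  field_simp

theorem add_rpow_div_rpow_sub_one_le {a d α δ p : ℝ} (ha : 0 ≤ a) (hd : 0 ≤ d)
    (hα : 0 < α) (hδ : 0 < δ) (hp : 1 ≤ p) :
    (a + d) ^ p / (α + δ) ^ (p - 1) ≤ a ^ p / α ^ (p - 1) + d ^ p / δ ^ (p - 1) := by
  have hαδ : 0 < α + δ := by positivity
  have hconv : ((a + d) / (α + δ)) ^ p ≤
      α / (α + δ) * (a / α) ^ p + δ / (α + δ) * (d / δ) ^ p := by
    have hmean : α / (α + δ) * (a / α) + δ / (α + δ) * (d / δ) = (a + d) / (α + δ) := by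
      field_simp
    simpa only [smul_eq_mul, hmean] using
      (convexOn_rpow hp).2 (mem_Ici.2 (div_nonneg ha hα.le)) (mem_Ici.2 (div_nonneg hd hδ.le))
        (div_nonneg hα.le hαδ.le) (div_nonneg hδ.le hαδ.le) (by field_simp)
  rw [← mul_div_rpow_eq p hαδ (add_nonneg ha hd), ← mul_div_rpow_eq p hα ha,
    ← mul_div_rpow_eq p hδ hd]
  calc (α + δ) * ((a + d) / (α + δ)) ^ p
      ≤ (α + δ) * (α / (α + δ) * (a / α) ^ p + δ / (α + δ) * (d / δ) ^ p) := by gcongr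
    _ = α * (a / α) ^ p + δ * (d / δ) ^ p := by field_simp

end Real

namespace MeasureTheory

variable {X : Type*} [MeasurableSpace X] {μ : Measure X} {φ : X → ℝ} {p : ℝ}

theorem AEStronglyMeasurable.of_rpow_const (hp : p ≠ 0) (hφ0 : 0 ≤ᵐ[μ] φ)
    (h : AEStronglyMeasurable (fun x => φ x ^ p) μ) : AEStronglyMeasurable φ μ := by
  refine (h.aemeasurable.pow_const p⁻¹).aestronglyMeasurable.congr ?_
  filter_upwards [hφ0] with x hx
  exact Real.rpow_rpow_inv hx hp

theorem Integrable.of_rpow_const [IsFiniteMeasure μ] (hp : 1 ≤ p) (hφ0 : 0 ≤ᵐ[μ] φ)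
    (h : Integrable (fun x => φ x ^ p) μ) : Integrable φ μ := by
  have hφ : AEStronglyMeasurable φ μ :=
    h.aestronglyMeasurable.of_rpow_const (by positivity) hφ0
  have hnorm : Integrable (fun x => ‖φ x‖ ^ p) μ := by
    refine h.congr ?_
    filter_upwards [hφ0] with x hx
    rw [Real.norm_of_nonneg hx]
  refine (integrable_norm_iff hφ).1 ?_
  simpa only [Real.rpow_one] using
    integrable_norm_rpow_of_le hφ zero_le_one (by positivity) hp hnorm

theorem setIntegral_rpow_div_le {S : Set X} (hS0 : μ S ≠ 0) (hS : μ S ≠ ⊤) (hp : 1 ≤ p)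
    (hφ0 : 0 ≤ᵐ[μ.restrict S] φ) (h : IntegrableOn (fun x => φ x ^ p) S μ) :
    (∫ x in S, φ x ∂μ) ^ p / (μ S).toReal ^ (p - 1) ≤ ∫ x in S, φ x ^ p ∂μ := by
  have : IsFiniteMeasure (μ.restrict S) := isFiniteMeasure_restrict.2 hS
  have hjensen : (⨍ x in S, φ x ∂μ) ^ p ≤ ⨍ x in S, φ x ^ p ∂μ :=
    (convexOn_rpow hp).map_set_average_le
      (continuousOn_id.rpow_const fun _ _ => Or.inr (by positivity)) isClosed_Ici hS0 hS hφ0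
      (h.of_rpow_const hp hφ0) h
  have hμS : 0 < (μ S).toReal := ENNReal.toReal_pos hS0 hS
  rwa [setAverage_eq, setAverage_eq, smul_eq_mul, smul_eq_mul, measureReal_def,
    ← mul_le_mul_iff_right₀ hμS, ← div_eq_inv_mul, mul_inv_cancel_left₀ hμS.ne',
    Real.mul_div_rpow_eq p hμS (setIntegral_nonneg_of_ae_restrict hφ0)] at hjensen

end MeasureTheory

theorem integral_pow_diff_lower_bound_general
    {X : Type*} [MeasurableSpace X] (μ : Measure X)
    (I Γ Δ : Set X) (hI : MeasurableSet I) (hΓ : MeasurableSet Γ)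
    (hΓI : Γ ⊆ I) (hΔ : Δ = I \ Γ)
    (hμΓ : 0 < μ Γ) (hμI : μ I < ⊤) (hμΔ : 0 < μ Δ)
    (p : ℝ) (hp : 1 < p)
    (φ : X → ℝ) (hφ0 : ∀ x ∈ I, 0 ≤ φ x)
    (hφint : IntegrableOn (fun x => φ x ^ p) I μ) :
    (1 / (μ I).toReal ^ (p - 1)) * (∫ x in I, φ x ∂μ) ^ p -
      (1 / (μ Γ).toReal ^ (p - 1)) * (∫ x in Γ, φ x ∂μ) ^ p ≤
        ∫ x in Δ, φ x ^ p ∂μ := by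
  subst hΔ
  have hΔm : MeasurableSet (I \ Γ) := hI.diff hΓ
  have hdisj : Disjoint Γ (I \ Γ) := disjoint_sdiff_right
  have hΓΔ : Γ ∪ I \ Γ = I := union_sdiff_cancel hΓI
  have hμΓfin : μ Γ ≠ ⊤ := (measure_lt_top_of_subset hΓI hμI.ne).ne
  have hμΔfin : μ (I \ Γ) ≠ ⊤ := (measure_lt_top_of_subset sdiff_subset hμI.ne).ne
  have : IsFiniteMeasure (μ.restrict I) := isFiniteMeasure_restrict.2 hμI.ne
  have hφI : IntegrableOn φ I μ :=
    hφint.of_rpow_const hp.le ((ae_restrict_iff' hI).2 (.of_forall hφ0))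
  have hφΓ0 : 0 ≤ᵐ[μ.restrict Γ] φ :=
    (ae_restrict_iff' hΓ).2 (.of_forall fun x hx => hφ0 x (hΓI hx))
  have hφΔ0 : 0 ≤ᵐ[μ.restrict (I \ Γ)] φ :=
    (ae_restrict_iff' hΔm).2 (.of_forall fun x hx => hφ0 x hx.1)
  have hintI : ∫ x in I, φ x ∂μ = (∫ x in Γ, φ x ∂μ) + ∫ x in I \ Γ, φ x ∂μ := by
    rw [← setIntegral_union hdisj hΔm (hφI.mono_set hΓI) (hφI.mono_set sdiff_subset), hΓΔ]
  have hμI' : (μ I).toReal = (μ Γ).toReal + (μ (I \ Γ)).toReal := by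
    rw [← ENNReal.toReal_add hμΓfin hμΔfin, ← measure_union hdisj hΔm, hΓΔ]
  have hradon := Real.add_rpow_div_rpow_sub_one_le (setIntegral_nonneg_of_ae_restrict hφΓ0)
    (setIntegral_nonneg_of_ae_restrict hφΔ0) (ENNReal.toReal_pos hμΓ.ne' hμΓfin)
    (ENNReal.toReal_pos hμΔ.ne' hμΔfin) hp.le
  have hjensen :=
    setIntegral_rpow_div_le hμΔ.ne' hμΔfin hp.le hφΔ0 (hφint.mono_set sdiff_subset)
  rw [hintI, hμI']
  simp only [one_div_mul_eq_div]
  linarith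

/-- For measurable sets `Γ ⊆ I` with `0 < μ(Γ) < μ(I) < ∞`, `Δ = I \ Γ` of positive
measure, `p > 1` and a nonnegative `φ` with `φ^p` integrable on `I`, one has
`∫_Δ φ^p dμ ≥ (1/μ(I)^{p−1})·(∫_I φ dμ)^p − (1/μ(Γ)^{p−1})·(∫_Γ φ dμ)^p`. -/
theorem integral_pow_diff_lower_bound
    {X : Type*} [MeasurableSpace X] (μ : Measure X)
    (I Γ Δ : Set X) (hI : MeasurableSet I) (hΓ : MeasurableSet Γ)
    (hΓI : Γ ⊆ I) (hΔ : Δ = I \ Γ)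
    (hμΓ : 0 < μ Γ) (hμΓI : μ Γ < μ I) (hμI : μ I < ⊤) (hμΔ : 0 < μ Δ)
    (p : ℝ) (hp : 1 < p)
    (φ : X → ℝ) (hφm : Measurable φ) (hφ0 : ∀ x ∈ I, 0 ≤ φ x)
    (hφint : IntegrableOn (fun x => φ x ^ p) I μ) :
    (1 / (μ I).toReal ^ (p - 1)) * (∫ x in I, φ x ∂μ) ^ p -
      (1 / (μ Γ).toReal ^ (p - 1)) * (∫ x in Γ, φ x ∂μ) ^ p ≤
        ∫ x in Δ, φ x ^ p ∂μ :=
  integral_pow_diff_lower_bound_general μ I Γ Δ hI hΓ hΓI hΔ hμΓ hμI hμΔ p hp φ hφ0 hφint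
end
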